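/- arXiv:2306.12025 — 2 statements merged into one kernel-verified Lean document; each statement's English description precedes it below -/
import Mathlib

section
/- For 2×2 SPD matrices, any SPD matrix X with distinct eigenvalues has exactly 4 eigen-decompositions (U, D) with U ∈ SO(2) and D diagonal positive-definite; more generally, a p×p SPD matrix with p distinct eigenvalues has exactly 2^(p-1)·p! eigen-decompositions with eigenvector matrix in SO(p). -/
/-!
Fix one decomposition `X = U₀ D₀ U₀ᵀ` with distinct eigenvalues `D₀ i i`. For any other
decomposition `(U, D)`, the rotation `W = U₀ᵀ U` satisfies `W D = D₀ W`; comparing entries, a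
nonzero `W i j` forces `D j j = D₀ i i`, so each column of `W` has a single nonzero entry, which
is `±1` by orthonormality. Hence `W` is a signed permutation matrix with determinant `1`, and
conversely each such matrix yields the decomposition `(U₀ W, D₀ ∘ σ)`. The pairs `(σ, ε)` with
`sign σ * ∏ ε = 1` form the kernel of a surjection onto `ℤˣ`, hence half of the `2 ^ p * p!`
signed permutations.
-/

open scoped BigOperators
open Matrix

namespace SR

variable {p : ℕ}

/-- Frobenius norm of a matrix. -/
noncomputable def frobNorm (A : Matrix (Fin p) (Fin p) ℝ) : ℝ :=
  Real.sqrt (∑ i, ∑ j, (A i j) ^ 2)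

/-- `U` is a special orthogonal (rotation) matrix. -/
def IsSO (U : Matrix (Fin p) (Fin p) ℝ) : Prop :=
  U * Uᵀ = 1 ∧ U.det = 1

/-- `D` is diagonal with positive diagonal entries. -/
def IsDiagPos (D : Matrix (Fin p) (Fin p) ℝ) : Prop :=
  D.IsDiag ∧ ∀ i, 0 < D i i

/-- `X` is symmetric positive definite. -/
def IsSPD (X : Matrix (Fin p) (Fin p) ℝ) : Prop :=
  X.IsSymm ∧ X.PosDef

/-- Membership in the eigen-decomposition space `M(p) = SO(p) × Diag⁺(p)`. -/
def IsM (m : Matrix (Fin p) (Fin p) ℝ × Matrix (Fin p) (Fin p) ℝ) : Prop :=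
  IsSO m.1 ∧ IsDiagPos m.2

/-- The eigen-composition map `F(U, D) = U D Uᵀ`. -/
def Fmap (m : Matrix (Fin p) (Fin p) ℝ × Matrix (Fin p) (Fin p) ℝ) :
    Matrix (Fin p) (Fin p) ℝ := m.1 * m.2 * m.1ᵀ

/-- `m = (U, D)` is an eigen-decomposition of `X`. -/
def IsEigenDecomp (X : Matrix (Fin p) (Fin p) ℝ)
    (m : Matrix (Fin p) (Fin p) ℝ × Matrix (Fin p) (Fin p) ℝ) : Prop :=
  IsM m ∧ Fmap m = X

/-- Geodesic distance on `SO(p)`: `(1/√2)‖Log (U₂ U₁ᵀ)‖_F`, where `Log` denotes a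
minimal-Frobenius-norm skew-symmetric logarithm. -/
noncomputable def dSO (U₁ U₂ : Matrix (Fin p) (Fin p) ℝ) : ℝ :=
  sInf {x : ℝ | ∃ A : Matrix (Fin p) (Fin p) ℝ, Aᵀ = -A ∧
    NormedSpace.exp A = U₂ * U₁ᵀ ∧ x = (1 / Real.sqrt 2) * frobNorm A}

/-- Geodesic distance on `Diag⁺(p)`: `‖Log D₁ − Log D₂‖_F`. -/
noncomputable def dDiag (D₁ D₂ : Matrix (Fin p) (Fin p) ℝ) : ℝ :=
  Real.sqrt (∑ i, (Real.log (D₁ i i) - Real.log (D₂ i i)) ^ 2)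

/-- Geodesic distance on `M(p)` with weight `k` on the rotation part. -/
noncomputable def dM (k : ℝ)
    (m₁ m₂ : Matrix (Fin p) (Fin p) ℝ × Matrix (Fin p) (Fin p) ℝ) : ℝ :=
  Real.sqrt (k * (dSO m₁.1 m₂.1) ^ 2 + (dDiag m₁.2 m₂.2) ^ 2)

/-- Scaling-rotation distance between SPD matrices. -/
noncomputable def dSR (k : ℝ) (X Y : Matrix (Fin p) (Fin p) ℝ) : ℝ :=
  sInf {x : ℝ | ∃ mX mY, IsEigenDecomp X mX ∧ IsEigenDecomp Y mY ∧ x = dM k mX mY}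

/-- Partial scaling-rotation distance. -/
noncomputable def dPSR (k : ℝ) (X : Matrix (Fin p) (Fin p) ℝ)
    (m : Matrix (Fin p) (Fin p) ℝ × Matrix (Fin p) (Fin p) ℝ) : ℝ :=
  sInf {x : ℝ | ∃ mX, IsEigenDecomp X mX ∧ x = dM k mX m}

/-- `P` is a signed permutation matrix. -/
def IsSignedPermMatrix (P : Matrix (Fin p) (Fin p) ℝ) : Prop :=
  ∃ (π : Equiv.Perm (Fin p)) (ε : Fin p → ℝ),
    (∀ i, ε i = 1 ∨ ε i = -1) ∧ ∀ i j, P i j = ε i * (if i = π j then 1 else 0)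

/-- `P` is an even signed permutation matrix (an element of `G(p)`). -/
def IsEvenSignedPerm (P : Matrix (Fin p) (Fin p) ℝ) : Prop :=
  IsSignedPermMatrix P ∧ P.det = 1

/-- `β_{G(p)}`: the minimal rotation distance from the identity to a nonidentity
even signed permutation matrix. -/
noncomputable def betaG (p : ℕ) : ℝ :=
  sInf {x : ℝ | ∃ h : Matrix (Fin p) (Fin p) ℝ, IsEvenSignedPerm h ∧ h ≠ 1 ∧ x = dSO 1 h}

/-- `S` has a repeated eigenvalue (belongs to a lower stratum). -/
def HasRepeatedEig (S : Matrix (Fin p) (Fin p) ℝ) : Prop :=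
  ∃ m, IsEigenDecomp S m ∧ ¬ Function.Injective (fun i => m.2 i i)

/-- `S` has `p` distinct eigenvalues (belongs to the top stratum). -/
def HasDistinctEigs (S : Matrix (Fin p) (Fin p) ℝ) : Prop :=
  ∃ m, IsEigenDecomp S m ∧ Function.Injective (fun i => m.2 i i)

/-- `δ(S)`: scaling-rotation distance from `S` to the lower strata. -/
noncomputable def deltaFun (k : ℝ) (S : Matrix (Fin p) (Fin p) ℝ) : ℝ :=
  sInf {x : ℝ | ∃ S', IsSPD S' ∧ HasRepeatedEig S' ∧ x = dSR k S S'}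

/-- Diameter of `SO(p)` in the rotation distance. -/
noncomputable def diamSO (p : ℕ) : ℝ :=
  sSup {x : ℝ | ∃ U V : Matrix (Fin p) (Fin p) ℝ, IsSO U ∧ IsSO V ∧ x = dSO U V}

end SR

open Equiv Function
open scoped Nat

section SignedPerm

variable {n R : Type*} [Fintype n] [DecidableEq n]

-- Only the size of the kernel matters, so the direct product group structure on pairs `(σ, ε)`
-- serves, although signed permutation matrices multiply as a semidirect product.
variable (n) in
def signedPermSign : Perm n × (n → ℤˣ) →* ℤˣ :=
  Perm.sign.coprod
    { toFun := fun ε => ∏ i, ε i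
      map_one' := Finset.prod_const_one
      map_mul' := fun _ _ => Finset.prod_mul_distrib }

theorem signedPermSign_apply (q : Perm n × (n → ℤˣ)) :
    signedPermSign n q = Perm.sign q.1 * ∏ i, q.2 i := rfl

theorem signedPermSign_surjective [Nonempty n] : Surjective (signedPermSign n) := by
  intro u
  obtain ⟨i⟩ := ‹Nonempty n›
  exact ⟨(1, Pi.mulSingle i u), by simp [signedPermSign_apply, Finset.prod_pi_mulSingle']⟩

theorem card_ker_signedPermSign_mul_two [Nonempty n] :
    Nat.card (signedPermSign n).ker * 2 = 2 ^ Fintype.card n * (Fintype.card n)! := by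
  have h := (signedPermSign n).ker.card_mul_index
  rw [Subgroup.index_ker, MonoidHom.range_eq_top_of_surjective _ signedPermSign_surjective,
    Subgroup.card_top, Nat.card_eq_fintype_card (α := ℤˣ), Fintype.card_units_int] at h
  rw [h, Nat.card_prod, Nat.card_perm, Nat.card_fun, Nat.card_eq_fintype_card (α := ℤˣ),
    Fintype.card_units_int, Nat.card_eq_fintype_card, mul_comm]

theorem card_ker_signedPermSign_fin (p : ℕ) :
    Nat.card (signedPermSign (Fin p)).ker = 2 ^ (p - 1) * p ! := by
  rcases p with _ | p
  · exact Nat.card_of_subsingleton 1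
  · have h := card_ker_signedPermSign_mul_two (n := Fin (p + 1))
    rw [Fintype.card_fin, pow_succ] at h
    simp only [add_tsub_cancel_right]
    linarith

theorem intCast_units_mul_self [Ring R] (u : ℤˣ) : ((u : ℤ) : R) * ((u : ℤ) : R) = 1 := by
  rw [← Int.cast_mul, ← Units.val_mul, Int.units_mul_self, Units.val_one, Int.cast_one]

theorem intCast_units_ne_zero [Ring R] [Nontrivial R] (u : ℤˣ) : ((u : ℤ) : R) ≠ 0 :=
  left_ne_zero_of_mul_eq_one (intCast_units_mul_self u)

variable [CommRing R]

variable (R) in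
def signedPermMatrix (σ : Perm n) (ε : n → ℤˣ) : Matrix n n R :=
  (σ.permMatrix R)ᵀ * diagonal fun j => ((ε j : ℤ) : R)

variable (σ : Perm n) (ε : n → ℤˣ)

theorem signedPermMatrix_apply (i j : n) :
    signedPermMatrix R σ ε i j = if i = σ j then ((ε j : ℤ) : R) else 0 := by
  simp [signedPermMatrix, mul_diagonal, PEquiv.toMatrix_apply, Equiv.symm_apply_eq]

theorem signedPermMatrix_mul_transpose :
    signedPermMatrix R σ ε * (signedPermMatrix R σ ε)ᵀ = 1 := by
  rw [signedPermMatrix, transpose_mul, diagonal_transpose, Matrix.mul_assoc,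
    ← Matrix.mul_assoc (diagonal _), diagonal_mul_diagonal]
  simp [intCast_units_mul_self, ← permMatrix_mul]

theorem det_signedPermMatrix :
    (signedPermMatrix R σ ε).det = ((signedPermSign n (σ, ε) : ℤ) : R) := by
  simp [signedPermMatrix, signedPermSign_apply]

theorem signedPermMatrix_mul_diagonal (d : n → R) :
    signedPermMatrix R σ ε * diagonal (d ∘ σ) = diagonal d * signedPermMatrix R σ ε := by
  ext i j
  simp only [mul_diagonal, diagonal_mul, signedPermMatrix_apply, Function.comp_apply]
  split_ifs with h
  · rw [h, mul_comm]
  · simp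

variable {σ ε} in
theorem signedPermMatrix_inj [CharZero R] {σ' : Perm n} {ε' : n → ℤˣ} :
    signedPermMatrix R σ ε = signedPermMatrix R σ' ε' ↔ σ = σ' ∧ ε = ε' := by
  refine ⟨fun h => ?_, fun h => by rw [h.1, h.2]⟩
  have hentry (j : n) : ((ε j : ℤ) : R) = if σ j = σ' j then ((ε' j : ℤ) : R) else 0 := by
    have hj := congrFun (congrFun h (σ j)) j
    rwa [signedPermMatrix_apply, signedPermMatrix_apply, if_pos rfl] at hj
  have hσ (j : n) : σ j = σ' j := by
    by_contra hne
    exact intCast_units_ne_zero (ε j) (by rw [hentry, if_neg hne])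
  refine ⟨Equiv.ext hσ, funext fun j => Units.ext ?_⟩
  simpa only [hσ, if_true, Int.cast_inj] using hentry j

theorem exists_eq_signedPermMatrix [IsDomain R] {W : Matrix n n R} (hW : Wᵀ * W = 1)
    (hcol : ∀ i i' j, W i j ≠ 0 → W i' j ≠ 0 → i = i') :
    ∃ σ ε, W = signedPermMatrix R σ ε := by
  have hcol_dot (j j' : n) : ∑ i, W i j * W i j' = (1 : Matrix n n R) j j' := by
    rw [← hW, mul_apply]
    rfl
  have hsupp (j : n) : ∃ i, W i j ≠ 0 := by
    by_contra! h
    simpa [h] using hcol_dot j j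
  choose σ₀ hσ₀ using hsupp
  have hzero (i j : n) (hi : i ≠ σ₀ j) : W i j = 0 := by
    by_contra h
    exact hi (hcol _ _ _ h (hσ₀ j))
  have hdot (j j' : n) : W (σ₀ j) j * W (σ₀ j) j' = (1 : Matrix n n R) j j' := by
    rw [← hcol_dot, Finset.sum_eq_single (σ₀ j) (fun i _ hi => by rw [hzero i j hi, zero_mul])
      (by simp)]
  have hinj : Injective σ₀ := by
    intro j j' h
    by_contra hne
    have hprod := hdot j j'
    rw [one_apply_ne hne, h] at hprod
    exact mul_ne_zero (h ▸ hσ₀ j) (hσ₀ j') hprod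
  have hsign (j : n) : ∃ u : ℤˣ, ((u : ℤ) : R) = W (σ₀ j) j := by
    rcases mul_self_eq_one_iff.mp (by simpa using hdot j j) with h | h
    · exact ⟨1, by simp [h]⟩
    · exact ⟨-1, by simp [h]⟩
  choose ε hε using hsign
  refine ⟨Equiv.ofBijective σ₀ hinj.bijective_of_finite, ε, ?_⟩
  ext i j
  rw [signedPermMatrix_apply, Equiv.ofBijective_apply]
  split_ifs with h
  · rw [h, hε]
  · exact hzero i j h

theorem exists_signedPermMatrix_of_mul_diagonal [IsDomain R] {W : Matrix n n R}
    (hW : Wᵀ * W = 1) {d e : n → R} (hd : Injective d) (h : W * diagonal e = diagonal d * W) :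
    ∃ σ ε, W = signedPermMatrix R σ ε ∧ e = d ∘ σ := by
  have hentry (i j : n) (hij : W i j ≠ 0) : e j = d i := by
    have hij' := congrFun (congrFun h i) j
    rw [mul_diagonal, diagonal_mul, mul_comm] at hij'
    exact mul_right_cancel₀ hij hij'
  obtain ⟨σ, ε, rfl⟩ := exists_eq_signedPermMatrix hW fun i i' j hi hi' =>
    hd ((hentry i j hi).symm.trans (hentry i' j hi'))
  refine ⟨σ, ε, rfl, funext fun j => hentry _ _ ?_⟩
  rw [signedPermMatrix_apply, if_pos rfl]
  exact intCast_units_ne_zero _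

end SignedPerm

namespace SR

variable {p : ℕ} {X U U₀ V D D₀ : Matrix (Fin p) (Fin p) ℝ}

theorem IsSO.transpose_mul_self (hU : IsSO U) : Uᵀ * U = 1 :=
  mul_eq_one_comm.mp hU.1

theorem IsSO.transpose (hU : IsSO U) : IsSO Uᵀ :=
  ⟨by rw [transpose_transpose, hU.transpose_mul_self], by rw [det_transpose, hU.2]⟩

theorem IsSO.mul (hU : IsSO U) (hV : IsSO V) : IsSO (U * V) := by
  refine ⟨?_, by rw [det_mul, hU.2, hV.2, one_mul]⟩
  rw [transpose_mul, Matrix.mul_assoc, ← Matrix.mul_assoc V, hV.1, Matrix.one_mul, hU.1]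

theorem IsSO.mul_right_injective (hU : IsSO U) : Injective (U * ·) := fun A B h => by
  simpa only [← Matrix.mul_assoc, hU.transpose_mul_self, Matrix.one_mul] using congrArg (Uᵀ * ·) h

theorem isSO_signedPermMatrix_iff {q : Perm (Fin p) × (Fin p → ℤˣ)} :
    IsSO (signedPermMatrix ℝ q.1 q.2) ↔ q ∈ (signedPermSign (Fin p)).ker := by
  rw [MonoidHom.mem_ker, IsSO, det_signedPermMatrix, Int.cast_eq_one, Units.val_eq_one]
  exact and_iff_right (signedPermMatrix_mul_transpose _ _)

theorem IsEigenDecomp.mul_signedPermMatrix (h₀ : IsEigenDecomp X (U₀, D₀))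
    {q : Perm (Fin p) × (Fin p → ℤˣ)} (hq : q ∈ (signedPermSign (Fin p)).ker) :
    IsEigenDecomp X (U₀ * signedPermMatrix ℝ q.1 q.2, diagonal (D₀.diag ∘ q.1)) := by
  obtain ⟨⟨hU₀, hD₀⟩, hX⟩ := h₀
  refine ⟨⟨hU₀.mul (isSO_signedPermMatrix_iff.mpr hq), isDiag_diagonal _,
    fun i => by simpa using hD₀.2 (q.1 i)⟩, ?_⟩
  have hcomm := signedPermMatrix_mul_diagonal (R := ℝ) q.1 q.2 D₀.diag
  have horth := signedPermMatrix_mul_transpose (R := ℝ) q.1 q.2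
  generalize signedPermMatrix ℝ q.1 q.2 = S at hcomm horth ⊢
  calc U₀ * S * diagonal (D₀.diag ∘ q.1) * (U₀ * S)ᵀ
      = U₀ * (S * diagonal (D₀.diag ∘ q.1)) * Sᵀ * U₀ᵀ := by
        simp only [transpose_mul, Matrix.mul_assoc]
    _ = U₀ * diagonal D₀.diag * (S * Sᵀ) * U₀ᵀ := by
        rw [hcomm]
        simp only [Matrix.mul_assoc]
    _ = X := by
        rw [horth, Matrix.mul_one, hD₀.1.diagonal_diag, ← hX]
        rfl

theorem IsEigenDecomp.exists_signedPermMatrix (h₀ : IsEigenDecomp X (U₀, D₀))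
    (hd : Injective D₀.diag) (h : IsEigenDecomp X (U, D)) :
    ∃ q ∈ (signedPermSign (Fin p)).ker,
      U = U₀ * signedPermMatrix ℝ q.1 q.2 ∧ D = diagonal (D₀.diag ∘ q.1) := by
  obtain ⟨⟨hU₀, hD₀⟩, hX₀⟩ := h₀
  obtain ⟨⟨hU, hD⟩, hX⟩ := h
  replace hX : U * D * Uᵀ = U₀ * D₀ * U₀ᵀ := hX.trans hX₀.symm
  have hW : IsSO (U₀ᵀ * U) := hU₀.transpose.mul hU
  have hcomm : U₀ᵀ * U * diagonal D.diag = diagonal D₀.diag * (U₀ᵀ * U) := by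
    rw [hD.1.diagonal_diag, hD₀.1.diagonal_diag]
    calc U₀ᵀ * U * D = U₀ᵀ * (U * D * Uᵀ) * U := by
          simp only [Matrix.mul_assoc, hU.transpose_mul_self, Matrix.mul_one]
      _ = U₀ᵀ * U₀ * D₀ * (U₀ᵀ * U) := by
          rw [hX]
          simp only [Matrix.mul_assoc]
      _ = D₀ * (U₀ᵀ * U) := by rw [hU₀.transpose_mul_self, Matrix.one_mul]
  obtain ⟨σ, ε, hWeq, hdiag⟩ :=
    exists_signedPermMatrix_of_mul_diagonal hW.transpose_mul_self hd hcomm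
  refine ⟨(σ, ε), isSO_signedPermMatrix_iff.mp (hWeq ▸ hW), ?_, ?_⟩
  · rw [← hWeq, ← Matrix.mul_assoc, hU₀.1, Matrix.one_mul]
  · rw [← hdiag, hD.1.diagonal_diag]

theorem card_isEigenDecomp (h₀ : IsEigenDecomp X (U₀, D₀)) (hd : Injective D₀.diag) :
    Nat.card {m // IsEigenDecomp X m} = Nat.card (signedPermSign (Fin p)).ker := by
  refine (Nat.card_congr (Equiv.ofBijective
    (fun q => ⟨_, h₀.mul_signedPermMatrix q.2⟩) ⟨?_, ?_⟩)).symm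
  · rintro ⟨q, _⟩ ⟨q', _⟩ h
    simp only [Subtype.mk.injEq, Prod.mk.injEq] at h
    obtain ⟨hσ, hε⟩ := signedPermMatrix_inj.mp (h₀.1.1.mul_right_injective h.1)
    exact Subtype.ext (Prod.ext hσ hε)
  · rintro ⟨⟨U, D⟩, h⟩
    obtain ⟨q, hq, rfl, rfl⟩ := h₀.exists_signedPermMatrix hd h
    exact ⟨⟨q, hq⟩, rfl⟩

theorem eigenDecomp_count_general (p : ℕ) (X : Matrix (Fin p) (Fin p) ℝ)
    (hdist : HasDistinctEigs X) :
    Nat.card {m : Matrix (Fin p) (Fin p) ℝ × Matrix (Fin p) (Fin p) ℝ // IsEigenDecomp X m}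
        = 2 ^ (p - 1) * Nat.factorial p ∧
    (p = 2 →
      Nat.card {m : Matrix (Fin p) (Fin p) ℝ × Matrix (Fin p) (Fin p) ℝ // IsEigenDecomp X m}
        = 4) := by
  obtain ⟨⟨U₀, D₀⟩, h₀, hd⟩ := hdist
  have hcard := (card_isEigenDecomp h₀ hd).trans (card_ker_signedPermSign_fin p)
  exact ⟨hcard, by rintro rfl; rw [hcard]; rfl⟩

/-- An SPD matrix with `p` distinct eigenvalues has exactly
`2^(p-1) * p!` eigen-decompositions; in particular for `p = 2` it has exactly 4. -/
theorem eigenDecomp_count (p : ℕ) (X : Matrix (Fin p) (Fin p) ℝ)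
    (hX : IsSPD X) (hdist : HasDistinctEigs X) :
    Nat.card {m : Matrix (Fin p) (Fin p) ℝ × Matrix (Fin p) (Fin p) ℝ // IsEigenDecomp X m}
        = 2 ^ (p - 1) * Nat.factorial p ∧
    (p = 2 →
      Nat.card {m : Matrix (Fin p) (Fin p) ℝ × Matrix (Fin p) (Fin p) ℝ // IsEigenDecomp X m}
        = 4) :=
  eigenDecomp_count_general p X hdist

end SR
end

section
/- The function δ(S) = inf { d_SR(S, S') : S' ∈ Sym⁺(p) with a repeated eigenvalue } equals min { d_D(D, Λ) : Λ ∈ Diag⁺(p) with a repeated diagonal entry } for any eigen-decomposition (U, D) of S; in particular δ(S) > 0 if and only if S has p distinct eigenvalues. -/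
/-! Two eigen-decompositions of the same matrix carry the same eigenvalues up to a permutation
(both lists are the roots of its characteristic polynomial). So for decompositions of `S` and of
an `S'` with a repeated eigenvalue `λ'_a = λ'_b`, already the `d_D`-part of `d_M` is at least the
`d_D`-distance from `D` to the set `{Λ_a = Λ_b}`, which is `|log λ_a - log λ_b| / √2` for the
corresponding eigenvalues of `S`. The smallest such gap is attained by keeping the rotation and
replacing the two closest eigenvalues by their geometric mean. -/

open scoped BigOperators
open Matrix

namespace SR

variable {p : ℕ}

theorem exists_perm_eq_comp_of_map_univ_eq {ι α : Type*} [Fintype ι] [DecidableEq α]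
    {f g : ι → α} (h : Finset.univ.val.map f = Finset.univ.val.map g) :
    ∃ σ : Equiv.Perm ι, g = f ∘ σ := by
  classical
  have hcard : ∀ c, Fintype.card {i // g i = c} = Fintype.card {i // f i = c} := fun c => by
    have := congrArg (Multiset.count c) h.symm
    simp only [Multiset.count_map] at this
    simpa [Fintype.card_subtype, Finset.card_def, Finset.filter_val, eq_comm] using this
  refine ⟨Equiv.ofFiberEquiv fun c => Fintype.equivOfCardEq (hcard c), ?_⟩
  funext i
  exact (Equiv.ofFiberEquiv_map _ i).symm

theorem charpoly_conj_of_mul_transpose_eq_one {n R : Type*} [Fintype n] [DecidableEq n]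
    [CommRing R] {U : Matrix n n R} (hU : U * Uᵀ = 1) (A : Matrix n n R) :
    (U * A * Uᵀ).charpoly = A.charpoly := by
  rw [charpoly_mul_comm, ← Matrix.mul_assoc, mul_eq_one_comm.mp hU, Matrix.one_mul]

theorem roots_charpoly_of_isDiag {n R : Type*} [Fintype n] [DecidableEq n]
    [CommRing R] [IsDomain R] {D : Matrix n n R} (hD : D.IsDiag) :
    D.charpoly.roots = Finset.univ.val.map fun i => D i i := by
  rw [← hD.diagonal_diag, charpoly_diagonal, Polynomial.roots_prod]
  · simp
  · simp [Finset.prod_ne_zero_iff, Polynomial.X_sub_C_ne_zero]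

theorem IsEigenDecomp.exists_perm {X : Matrix (Fin p) (Fin p) ℝ}
    {m₁ m₂ : Matrix (Fin p) (Fin p) ℝ × Matrix (Fin p) (Fin p) ℝ}
    (h₁ : IsEigenDecomp X m₁) (h₂ : IsEigenDecomp X m₂) :
    ∃ σ : Equiv.Perm (Fin p), (fun i => m₂.2 i i) = (fun i => m₁.2 i i) ∘ σ := by
  have hroots : ∀ m, IsEigenDecomp X m →
      X.charpoly.roots = Finset.univ.val.map fun i => m.2 i i := fun m hm => by
      rw [← hm.2, Fmap, charpoly_conj_of_mul_transpose_eq_one hm.1.1.1,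
        roots_charpoly_of_isDiag hm.1.2.1]
  exact exists_perm_eq_comp_of_map_univ_eq ((hroots m₁ h₁).symm.trans (hroots m₂ h₂))

theorem dSO_self {U : Matrix (Fin p) (Fin p) ℝ} (hU : IsSO U) : dSO U U = 0 := by
  refine IsLeast.csInf_eq ⟨⟨0, by simp, by rw [NormedSpace.exp_zero, hU.1], by simp [frobNorm]⟩,
    ?_⟩
  rintro x ⟨A, -, -, rfl⟩
  have := Real.sqrt_nonneg (∑ i, ∑ j, (A i j) ^ 2)
  positivity

theorem dM_eq_dDiag {k : ℝ} {U : Matrix (Fin p) (Fin p) ℝ} (hU : IsSO U)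
    (D Λ : Matrix (Fin p) (Fin p) ℝ) : dM k (U, D) (U, Λ) = dDiag D Λ := by
  simp [dM, dSO_self hU, dDiag]

theorem dDiag_le_dM {k : ℝ} (hk : 0 ≤ k)
    (m₁ m₂ : Matrix (Fin p) (Fin p) ℝ × Matrix (Fin p) (Fin p) ℝ) :
    dDiag m₁.2 m₂.2 ≤ dM k m₁ m₂ := by
  refine Real.le_sqrt_of_sq_le (le_add_of_nonneg_left ?_)
  positivity

theorem dSR_le_dM {k : ℝ} {X Y : Matrix (Fin p) (Fin p) ℝ}
    {mX mY : Matrix (Fin p) (Fin p) ℝ × Matrix (Fin p) (Fin p) ℝ}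
    (hX : IsEigenDecomp X mX) (hY : IsEigenDecomp Y mY) : dSR k X Y ≤ dM k mX mY :=
  csInf_le ⟨0, by rintro x ⟨_, _, _, _, rfl⟩; exact Real.sqrt_nonneg _⟩ ⟨mX, mY, hX, hY, rfl⟩

theorem isSPD_fmap {m : Matrix (Fin p) (Fin p) ℝ × Matrix (Fin p) (Fin p) ℝ} (hm : IsM m) :
    IsSPD (Fmap m) := by
  have hpos : (Fmap m).PosDef := by
    rw [Fmap, ← hm.2.1.diagonal_diag]
    refine (PosDef.diagonal hm.2.2).mul_mul_conjTranspose_same fun v w hvw => ?_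
    simpa [vecMul_vecMul, hm.1.1] using congrArg (· ᵥ* m.1ᵀ) hvw
  exact ⟨by simpa [conjTranspose_eq_transpose_of_trivial] using hpos.1, hpos⟩

noncomputable def logGap (D : Matrix (Fin p) (Fin p) ℝ) (a b : Fin p) : ℝ :=
  |Real.log (D a a) - Real.log (D b b)| / Real.sqrt 2

theorem logGap_le_dDiag (E Λ : Matrix (Fin p) (Fin p) ℝ) {a b : Fin p}
    (hab : a ≠ b) (hΛ : Λ a a = Λ b b) : logGap E a b ≤ dDiag E Λ := by
  set x := Real.log (E a a) - Real.log (Λ a a)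
  set y := Real.log (E b b) - Real.log (Λ b b)
  have hpair : x ^ 2 + y ^ 2 ≤ ∑ i, (Real.log (E i i) - Real.log (Λ i i)) ^ 2 := by
    have := Finset.sum_le_sum_of_subset_of_nonneg (Finset.subset_univ {a, b})
      fun i _ _ => sq_nonneg (Real.log (E i i) - Real.log (Λ i i))
    rwa [Finset.sum_pair hab] at this
  have hxy : Real.log (E a a) - Real.log (E b b) = x - y := by simp only [x, y, hΛ]; ring
  calc logGap E a b = Real.sqrt ((x - y) ^ 2 / 2) := by
        rw [logGap, Real.sqrt_div (sq_nonneg _), Real.sqrt_sq_eq_abs, hxy]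
    _ ≤ dDiag E Λ := Real.sqrt_le_sqrt (by nlinarith [sq_nonneg (x + y)])

theorem logGap_pos {D : Matrix (Fin p) (Fin p) ℝ} (hD : ∀ t, 0 < D t t) {a b : Fin p}
    (hab : D a a ≠ D b b) : 0 < logGap D a b := by
  have hlog : Real.log (D a a) ≠ Real.log (D b b) := fun h =>
    hab (Real.log_injOn_pos (hD a) (hD b) h)
  exact div_pos (abs_pos.2 (sub_ne_zero.2 hlog)) (by positivity)

theorem logGap_eq_of_diag_eq_comp {D E : Matrix (Fin p) (Fin p) ℝ} {σ : Equiv.Perm (Fin p)}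
    (h : (fun i => E i i) = (fun i => D i i) ∘ σ) (a b : Fin p) :
    logGap E a b = logGap D (σ a) (σ b) := by
  have hE : ∀ i, E i i = D (σ i) (σ i) := congrFun h
  rw [logGap, logGap, hE, hE]

theorem exists_logGap_min (D : Matrix (Fin p) (Fin p) ℝ) (hp : 2 ≤ p) :
    ∃ i j, i ≠ j ∧ ∀ a b, a ≠ b → logGap D i j ≤ logGap D a b := by
  have hne : (Finset.univ.offDiag : Finset (Fin p × Fin p)).Nonempty :=
    ⟨(⟨0, by omega⟩, ⟨1, by omega⟩), by simp [Fin.ext_iff]⟩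
  obtain ⟨⟨i, j⟩, hij, hmin⟩ :=
    Finset.univ.offDiag.exists_min_image (fun q => logGap D q.1 q.2) hne
  exact ⟨i, j, (Finset.mem_offDiag.1 hij).2.2, fun a b hab => hmin (a, b) (by simpa using hab)⟩

theorem le_dDiag_of_not_injective {c : ℝ} {E Λ : Matrix (Fin p) (Fin p) ℝ}
    (hc : ∀ a b, a ≠ b → c ≤ logGap E a b) (hΛ : ¬ Function.Injective fun t => Λ t t) :
    c ≤ dDiag E Λ := by
  obtain ⟨a, b, hΛab, hab⟩ := Function.not_injective_iff.mp hΛ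
  exact (hc a b hab).trans (logGap_le_dDiag E Λ hab hΛab)

theorem le_dSR_of_hasRepeatedEig {k c : ℝ} (hk : 0 ≤ k) {S S' : Matrix (Fin p) (Fin p) ℝ}
    {m : Matrix (Fin p) (Fin p) ℝ × Matrix (Fin p) (Fin p) ℝ} (hm : IsEigenDecomp S m)
    (hc : ∀ a b, a ≠ b → c ≤ logGap m.2 a b) (hS' : HasRepeatedEig S') : c ≤ dSR k S S' := by
  obtain ⟨m', hm', hrep⟩ := hS'
  refine le_csInf ⟨_, m, m', hm, hm', rfl⟩ ?_
  rintro x ⟨mX, mY, hX, hY, rfl⟩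
  obtain ⟨σ, hσ⟩ := hm.exists_perm hX
  obtain ⟨τ, hτ⟩ := hm'.exists_perm hY
  have hcX : ∀ a b, a ≠ b → c ≤ logGap mX.2 a b := fun a b hab => by
    rw [logGap_eq_of_diag_eq_comp hσ]
    exact hc _ _ (σ.injective.ne hab)
  have hrepY : ¬ Function.Injective fun t => mY.2 t t := by
    rwa [hτ, Equiv.injective_comp]
  exact (le_dDiag_of_not_injective hcX hrepY).trans (dDiag_le_dM hk mX mY)

/-- The `d_D`-nearest point to `D` among diagonal matrices whose entries at `i` and `j` agree. -/
noncomputable def mergeDiag (D : Matrix (Fin p) (Fin p) ℝ) (i j : Fin p) :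
    Matrix (Fin p) (Fin p) ℝ :=
  diagonal fun t => if t = i ∨ t = j then Real.sqrt (D i i * D j j) else D t t

theorem isDiagPos_mergeDiag {D : Matrix (Fin p) (Fin p) ℝ} (hD : IsDiagPos D) (i j : Fin p) :
    IsDiagPos (mergeDiag D i j) := by
  refine ⟨isDiag_diagonal _, fun t => ?_⟩
  simp only [mergeDiag, diagonal_apply_eq]
  split_ifs
  · exact Real.sqrt_pos.2 (mul_pos (hD.2 i) (hD.2 j))
  · exact hD.2 t

theorem not_injective_mergeDiag (D : Matrix (Fin p) (Fin p) ℝ) {i j : Fin p} (hij : i ≠ j) :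
    ¬ Function.Injective fun t => mergeDiag D i j t t :=
  fun h => hij (h (by simp [mergeDiag]))

theorem dDiag_mergeDiag {D : Matrix (Fin p) (Fin p) ℝ} (hD : ∀ t, 0 < D t t) {i j : Fin p}
    (hij : i ≠ j) : dDiag D (mergeDiag D i j) = logGap D i j := by
  have hmean : Real.log (Real.sqrt (D i i * D j j))
      = (Real.log (D i i) + Real.log (D j j)) / 2 := by
    rw [Real.log_sqrt (mul_pos (hD i) (hD j)).le,
      Real.log_mul (hD i).ne' (hD j).ne']
  have hsum : ∑ t, (Real.log (D t t) - Real.log (mergeDiag D i j t t)) ^ 2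
      = (Real.log (D i i) - Real.log (D j j)) ^ 2 / 2 := by
    rw [Finset.sum_eq_add_of_mem i j (Finset.mem_univ _) (Finset.mem_univ _) hij
      fun t _ ht => by simp [mergeDiag, ht.1, ht.2]]
    simp only [mergeDiag, diagonal_apply_eq, true_or, or_true, if_true, hmean]
    ring
  rw [dDiag, hsum, Real.sqrt_div (sq_nonneg _), Real.sqrt_sq_eq_abs, logGap]

theorem deltaFun_eq_logGap {k : ℝ} (hk : 0 ≤ k) {S U D : Matrix (Fin p) (Fin p) ℝ}
    (hm : IsEigenDecomp S (U, D)) {i j : Fin p} (hij : i ≠ j)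
    (hmin : ∀ a b, a ≠ b → logGap D i j ≤ logGap D a b) :
    deltaFun k S = logGap D i j := by
  have hS' : IsEigenDecomp (Fmap (U, mergeDiag D i j)) (U, mergeDiag D i j) :=
    ⟨⟨hm.1.1, isDiagPos_mergeDiag hm.1.2 i j⟩, rfl⟩
  have hrep : HasRepeatedEig (Fmap (U, mergeDiag D i j)) := ⟨_, hS', not_injective_mergeDiag D hij⟩
  have hdSR : dSR k S (Fmap (U, mergeDiag D i j)) = logGap D i j :=
    le_antisymm
      ((dSR_le_dM hm hS').trans_eq (by rw [dM_eq_dDiag hm.1.1, dDiag_mergeDiag hm.1.2.2 hij]))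
      (le_dSR_of_hasRepeatedEig hk hm hmin hrep)
  refine IsLeast.csInf_eq ⟨⟨_, isSPD_fmap hS'.1, hrep, hdSR.symm⟩, ?_⟩
  rintro x ⟨S', -, hrep', rfl⟩
  exact le_dSR_of_hasRepeatedEig hk hm hmin hrep'

theorem sInf_dDiag_eq_logGap {D : Matrix (Fin p) (Fin p) ℝ} (hD : IsDiagPos D) {i j : Fin p}
    (hij : i ≠ j) (hmin : ∀ a b, a ≠ b → logGap D i j ≤ logGap D a b) :
    sInf {x : ℝ | ∃ Λ : Matrix (Fin p) (Fin p) ℝ, IsDiagPos Λ ∧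
        (¬ Function.Injective fun i => Λ i i) ∧ x = dDiag D Λ} = logGap D i j := by
  refine IsLeast.csInf_eq ⟨⟨mergeDiag D i j, isDiagPos_mergeDiag hD i j,
    not_injective_mergeDiag D hij, (dDiag_mergeDiag hD.2 hij).symm⟩, ?_⟩
  rintro x ⟨Λ, -, hrep, rfl⟩
  exact le_dDiag_of_not_injective hmin hrep

theorem deltaFun_eq_general (p : ℕ) (hp : 2 ≤ p) (k : ℝ) (hk : 0 < k)
    (S : Matrix (Fin p) (Fin p) ℝ)
    (m : Matrix (Fin p) (Fin p) ℝ × Matrix (Fin p) (Fin p) ℝ)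
    (hm : IsEigenDecomp S m) :
    deltaFun k S = sInf {x : ℝ | ∃ Λ : Matrix (Fin p) (Fin p) ℝ, IsDiagPos Λ ∧
        (¬ Function.Injective fun i => Λ i i) ∧ x = dDiag m.2 Λ} ∧
    (∃ Λ : Matrix (Fin p) (Fin p) ℝ, IsDiagPos Λ ∧
        (¬ Function.Injective fun i => Λ i i) ∧ dDiag m.2 Λ = deltaFun k S) ∧
    (0 < deltaFun k S ↔ Function.Injective fun i => m.2 i i) := by
  obtain ⟨U, D⟩ := m
  obtain ⟨i, j, hij, hmin⟩ := exists_logGap_min D hp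
  have hδ : deltaFun k S = logGap D i j := deltaFun_eq_logGap hk.le hm hij hmin
  refine ⟨hδ.trans (sInf_dDiag_eq_logGap hm.1.2 hij hmin).symm,
    ⟨mergeDiag D i j, isDiagPos_mergeDiag hm.1.2 i j, not_injective_mergeDiag D hij,
      (dDiag_mergeDiag hm.1.2.2 hij).trans hδ.symm⟩, ?_⟩
  rw [hδ]
  refine ⟨fun hgap a b hab => by_contra fun hne => ?_,
    fun hinj => logGap_pos hm.1.2.2 (hinj.ne hij)⟩
  have hzero : logGap D a b = 0 := by simp [logGap, show D a a = D b b from hab]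
  linarith [hmin a b hne]

/-- `δ(S)` equals the minimal `d_D`-distance from the eigenvalue matrix
of any eigen-decomposition of `S` to the diagonal matrices with a repeated entry; in
particular `δ(S) > 0` iff `S` has `p` distinct eigenvalues. -/
theorem deltaFun_eq (p : ℕ) (hp : 2 ≤ p) (k : ℝ) (hk : 0 < k)
    (S : Matrix (Fin p) (Fin p) ℝ) (hS : IsSPD S)
    (m : Matrix (Fin p) (Fin p) ℝ × Matrix (Fin p) (Fin p) ℝ)
    (hm : IsEigenDecomp S m) :
    deltaFun k S = sInf {x : ℝ | ∃ Λ : Matrix (Fin p) (Fin p) ℝ, IsDiagPos Λ ∧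
        (¬ Function.Injective fun i => Λ i i) ∧ x = dDiag m.2 Λ} ∧
    (∃ Λ : Matrix (Fin p) (Fin p) ℝ, IsDiagPos Λ ∧
        (¬ Function.Injective fun i => Λ i i) ∧ dDiag m.2 Λ = deltaFun k S) ∧
    (0 < deltaFun k S ↔ Function.Injective fun i => m.2 i i) :=
  deltaFun_eq_general p hp k hk S m hm

end SR
end
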